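/- arXiv:0801.2320 — 8 statements merged into one kernel-verified Lean document; each statement's English description precedes it below -/
import Mathlib

section
/- Let X be a real Banach space, let z in the unit sphere S_X be a weakly exposed point with weakly exposing functional f in the unit sphere of X*, and let U be a relatively weakly open subset of S_X containing z. Then there exists alpha in (0,1) such that {x in B_X : f(x) > alpha} ∩ S_X is contained in U. -/
open Metric Filter Topology NormedSpace

/-- A subset of `X` is weakly open if it is open in the weak topology on `X`. -/
def WeaklyOpen (X : Type*) [NormedAddCommGroup X] [NormedSpace ℝ X] (V : Set X) : Prop :=
  IsOpen ((toWeakSpace ℝ X) '' V)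

/-- `U` is a relatively weakly open subset of `S`. -/
def RelWeaklyOpenIn (X : Type*) [NormedAddCommGroup X] [NormedSpace ℝ X]
    (U S : Set X) : Prop :=
  ∃ V : Set X, WeaklyOpen X V ∧ U = V ∩ S

theorem slice_subset_of_weaklyExposed
    (X : Type*) [NormedAddCommGroup X] [NormedSpace ℝ X] [CompleteSpace X]
    (z : X) (hz : ‖z‖ = 1) (f : StrongDual ℝ X) (hf : ‖f‖ = 1) (hfz : f z = 1)
    (hexp : ∀ x : ℕ → X, (∀ n, x n ∈ closedBall (0 : X) 1) →
      Tendsto (fun n => f (x n)) atTop (𝓝 1) →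
      ∀ g : StrongDual ℝ X, Tendsto (fun n => g (x n)) atTop (𝓝 (g z)))
    (U : Set X) (hU : RelWeaklyOpenIn X U (sphere (0 : X) 1)) (hzU : z ∈ U) :
    ∃ α ∈ Set.Ioo (0 : ℝ) 1,
      {x ∈ closedBall (0 : X) 1 | f x > α} ∩ sphere (0 : X) 1 ⊆ U := by
  obtain ⟨V, hVopen, hUV⟩ := hU
  by_contra hcon
  push_neg at hcon
  have hsel : ∀ n : ℕ, ∃ x : X, (x ∈ closedBall (0 : X) 1 ∧ f x > 1 - 1 / (n + 2)) ∧
      x ∈ sphere (0 : X) 1 ∧ x ∉ U := by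
    intro n
    have h2 : (0 : ℝ) < (n : ℝ) + 2 := by positivity
    have hα : (1 - 1 / ((n : ℝ) + 2)) ∈ Set.Ioo (0 : ℝ) 1 := by
      constructor
      · have : 1 / ((n : ℝ) + 2) < 1 := by
          rw [div_lt_one h2]; linarith
        linarith
      · have : 0 < 1 / ((n : ℝ) + 2) := by positivity
        linarith
    obtain ⟨x, hx, hxU⟩ := Set.not_subset.mp (hcon _ hα)
    exact ⟨x, hx.1, hx.2, hxU⟩
  choose x hx hxS hxU using hsel
  have hxB : ∀ n, x n ∈ closedBall (0 : X) 1 := fun n => (hx n).1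
  have hfle : ∀ n, f (x n) ≤ 1 := by
    intro n
    have := f.le_opNorm (x n)
    have hxn : ‖x n‖ ≤ 1 := by simpa [mem_closedBall, dist_eq_norm] using hxB n
    calc f (x n) ≤ ‖f‖ * ‖x n‖ := le_trans (le_abs_self _) this
    _ ≤ 1 := by rw [hf]; simpa using hxn
  have htends : Tendsto (fun n => f (x n)) atTop (𝓝 1) := by
    have hlow : Tendsto (fun n : ℕ => 1 - 1 / ((n : ℝ) + 2)) atTop (𝓝 1) := by
      have h1 := (tendsto_one_div_add_atTop_nhds_zero_nat (𝕜 := ℝ)).comp (tendsto_add_atTop_nat 1)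
      have heq : ((fun n : ℕ => 1 / ((n : ℝ) + 1)) ∘ fun a => a + 1) =
          fun n : ℕ => 1 / ((n : ℝ) + 2) := by
        ext n; simp [Function.comp]; push_cast; ring_nf
      rw [heq] at h1
      have : Tendsto (fun n : ℕ => 1 / ((n : ℝ) + 2)) atTop (𝓝 0) := h1
      simpa using tendsto_const_nhds.sub this
    exact tendsto_of_tendsto_of_tendsto_of_le_of_le hlow tendsto_const_nhds
      (fun n => le_of_lt (hx n).2) hfle
  have hweak := hexp x hxB htends
  have hBinj : Function.Injective (topDualPairing ℝ X).flip := by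
    intro a b hab
    apply NormedSpace.eq_iff_forall_dual_eq ℝ |>.2
    intro g
    have := congrArg (fun φ => φ g) hab
    simpa [topDualPairing_apply] using this
  have hwtends : Tendsto (fun n => toWeakSpace ℝ X (x n)) atTop (𝓝 (toWeakSpace ℝ X z)) := by
    refine (WeakBilin.tendsto_iff_forall_eval_tendsto (B := (topDualPairing ℝ X).flip)
      (f := fun n => toWeakSpace ℝ X (x n)) (x := toWeakSpace ℝ X z) hBinj).2 ?_
    intro g
    exact hweak g
  have hzV : toWeakSpace ℝ X z ∈ (toWeakSpace ℝ X) '' V := by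
    exact Set.mem_image_of_mem _ (hUV ▸ hzU).1
  have hev : ∀ᶠ n in atTop, toWeakSpace ℝ X (x n) ∈ (toWeakSpace ℝ X) '' V :=
    hwtends.eventually (hVopen.eventually_mem hzV)
  obtain ⟨n, hn⟩ := hev.exists
  obtain ⟨v, hvV, hveq⟩ := hn
  have : v = x n := (toWeakSpace ℝ X).injective hveq
  exact hxU n (hUV ▸ Set.mem_inter (this ▸ hvV) (hxS n))
end

section
/- Let X be a real Banach space, f a norm-one functional in X*, and delta in (0,1). If the open slice S(B_X, f, delta) = {x in B_X : f(x) > delta} is nonempty, then diam(S(B_X, f, delta)) <= diam(S(B_X, f, delta) ∩ S_X) + 2*(1 - delta). -/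
open Metric NormedSpace

theorem diam_slice_le_diam_slice_inter_sphere_add
    (X : Type*) [NormedAddCommGroup X] [NormedSpace ℝ X] [CompleteSpace X]
    (f : StrongDual ℝ X) (hf : ‖f‖ = 1) (δ : ℝ) (hδ : δ ∈ Set.Ioo (0 : ℝ) 1)
    (hne : ({x ∈ closedBall (0 : X) 1 | f x > δ}).Nonempty) :
    diam {x ∈ closedBall (0 : X) 1 | f x > δ} ≤
      diam ({x ∈ closedBall (0 : X) 1 | f x > δ} ∩ sphere (0 : X) 1) + 2 * (1 - δ) := by
  obtain ⟨hδ0, hδ1⟩ := hδ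
  -- Key facts about elements of the slice
  have key : ∀ x ∈ {x ∈ closedBall (0 : X) 1 | f x > δ},
      (‖x‖⁻¹ • x) ∈ ({x ∈ closedBall (0 : X) 1 | f x > δ} ∩ sphere (0 : X) 1) ∧
      dist x (‖x‖⁻¹ • x) ≤ 1 - δ := by
    rintro x ⟨hx1, hx2⟩
    have hxball : ‖x‖ ≤ 1 := by simpa [mem_closedBall, dist_eq_norm] using hx1
    have hfx : f x ≤ ‖x‖ := by
      calc f x ≤ ‖f‖ * ‖x‖ := le_trans (le_abs_self _) (f.le_opNorm x)
        _ = ‖x‖ := by rw [hf, one_mul]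
    have hxpos : 0 < ‖x‖ := lt_of_lt_of_le (lt_trans hδ0 hx2) hfx
    have hinv1 : 1 ≤ ‖x‖⁻¹ := (one_le_inv₀ hxpos).2 hxball
    constructor
    · refine ⟨⟨?_, ?_⟩, ?_⟩
      · simp [mem_closedBall, dist_eq_norm, norm_smul, abs_of_pos (inv_pos.2 hxpos),
          inv_mul_cancel₀ hxpos.ne']
      · show δ < f (‖x‖⁻¹ • x)
        rw [map_smul, smul_eq_mul]
        calc δ < f x := hx2
          _ = 1 * f x := (one_mul _).symm
          _ ≤ ‖x‖⁻¹ * f x := by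
              apply mul_le_mul_of_nonneg_right hinv1 (le_of_lt (lt_trans hδ0 hx2))
      · simp [mem_sphere, dist_eq_norm, norm_smul, abs_of_pos (inv_pos.2 hxpos),
          inv_mul_cancel₀ hxpos.ne']
    · have : dist x (‖x‖⁻¹ • x) = 1 - ‖x‖ := by
        rw [dist_eq_norm]
        have : x - ‖x‖⁻¹ • x = (1 - ‖x‖⁻¹) • x := by
          rw [sub_smul, one_smul]
        rw [this, norm_smul, Real.norm_eq_abs, abs_of_nonpos (by linarith), neg_sub,
          sub_mul, inv_mul_cancel₀ hxpos.ne', one_mul]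
      rw [this]
      linarith
  have hbdd : Bornology.IsBounded ({x ∈ closedBall (0 : X) 1 | f x > δ} ∩ sphere (0 : X) 1) := by
    apply (isBounded_closedBall (x := (0 : X)) (r := 1)).subset
    intro x hx
    exact hx.1.1
  apply diam_le_of_forall_dist_le
  · have := diam_nonneg (s := {x ∈ closedBall (0 : X) 1 | f x > δ} ∩ sphere (0 : X) 1)
    linarith
  · intro x hx y hy
    obtain ⟨hxmem, hxd⟩ := key x hx
    obtain ⟨hymem, hyd⟩ := key y hy
    have hmid : dist (‖x‖⁻¹ • x) (‖y‖⁻¹ • y) ≤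
        diam ({x ∈ closedBall (0 : X) 1 | f x > δ} ∩ sphere (0 : X) 1) :=
      dist_le_diam_of_mem hbdd hxmem hymem
    calc dist x y ≤ dist x (‖x‖⁻¹ • x) + dist (‖x‖⁻¹ • x) (‖y‖⁻¹ • y) + dist (‖y‖⁻¹ • y) y :=
          dist_triangle4 _ _ _ _
      _ ≤ (1 - δ) + diam ({x ∈ closedBall (0 : X) 1 | f x > δ} ∩ sphere (0 : X) 1) + (1 - δ) := by
          have := hyd
          rw [dist_comm] at this
          gcongr
      _ = _ := by ring
end

section
/- Let X be a real convex-transitive Banach space. Then the dual X* is convex omega*-transitive: for every norm-one functional f in X*, the weak-star closed convex hull of {T*(f) : T a surjective linear isometry of X} equals the closed unit ball of X*, where T* denotes the adjoint of T. -/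
open Metric NormedSpace

/-- The orbit of a point under the group of surjective linear isometries of `X`. -/
def isometryOrbit (X : Type*) [NormedAddCommGroup X] [NormedSpace ℝ X] (x : X) : Set X :=
  {y | ∃ T : X ≃ₗᵢ[ℝ] X, T x = y}

/-- `X` is convex-transitive: the closed convex hull of every orbit of a unit vector is the
closed unit ball. -/
def ConvexTransitive (X : Type*) [NormedAddCommGroup X] [NormedSpace ℝ X] : Prop :=
  ∀ x : X, ‖x‖ = 1 → closure (convexHull ℝ (isometryOrbit X x)) = closedBall (0 : X) 1

section Aux

variable {X : Type*} [NormedAddCommGroup X] [NormedSpace ℝ X]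

/-- From convex transitivity: if `f (T x) ≤ c` for all isometries `T`, then `‖x‖ ≤ c`. -/
lemma lemA (hct : ConvexTransitive X) (f : StrongDual ℝ X) (hf : ‖f‖ = 1)
    (x : X) (c : ℝ) (h : ∀ T : X ≃ₗᵢ[ℝ] X, f (T x) ≤ c) : ‖x‖ ≤ c := by
  have h1 := h (LinearIsometryEquiv.refl ℝ X)
  have h2 := h (LinearIsometryEquiv.neg ℝ)
  simp only [LinearIsometryEquiv.coe_refl, id_eq, LinearIsometryEquiv.coe_neg, map_neg] at h1 h2
  have hc0 : 0 ≤ c := by linarith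
  rcases eq_or_ne x 0 with rfl | hx
  · simpa using hc0
  have hxn : 0 < ‖x‖ := norm_pos_iff.2 hx
  set u : X := ‖x‖⁻¹ • x with hu_def
  have hu : ‖u‖ = 1 := by
    rw [hu_def, norm_smul, norm_inv, norm_norm, inv_mul_cancel₀ hxn.ne']
  have hH : closedBall (0 : X) 1 ⊆ {y : X | f y ≤ c / ‖x‖} := by
    rw [← hct u hu]
    refine closure_minimal (convexHull_min ?_ (convex_halfSpace_le ⟨f.map_add, f.map_smul⟩ _)) ?_
    · rintro y ⟨T, rfl⟩
      have : f (T u) = ‖x‖⁻¹ * f (T x) := by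
        rw [hu_def, map_smul, map_smul, smul_eq_mul]
      rw [Set.mem_setOf_eq, this, div_eq_inv_mul]
      exact mul_le_mul_of_nonneg_left (h T) (inv_nonneg.2 hxn.le)
    · exact isClosed_le f.continuous continuous_const
  have hnorm : ‖f‖ ≤ c / ‖x‖ := by
    refine f.opNorm_le_bound (div_nonneg hc0 hxn.le) fun y => ?_
    rcases eq_or_ne y 0 with rfl | hy
    · simp
    have hyn : 0 < ‖y‖ := norm_pos_iff.2 hy
    set z : X := ‖y‖⁻¹ • y with hz_def
    have hz : ‖z‖ = 1 := by
      rw [hz_def, norm_smul, norm_inv, norm_norm, inv_mul_cancel₀ hyn.ne']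
    have hz1 : f z ≤ c / ‖x‖ := hH (by simp [mem_closedBall_zero_iff, hz])
    have hz2 : -(f z) ≤ c / ‖x‖ := by
      have hm : -z ∈ closedBall (0 : X) 1 := by
        rw [mem_closedBall_zero_iff, norm_neg, hz]
      have := hH hm
      simpa using this
    have habs : |f z| ≤ c / ‖x‖ := abs_le.2 ⟨by linarith, hz1⟩
    have hyz : f y = ‖y‖ * f z := by
      rw [hz_def, map_smul, smul_eq_mul, ← mul_assoc, mul_inv_cancel₀ hyn.ne', one_mul]
    rw [Real.norm_eq_abs, hyz, abs_mul, abs_of_nonneg hyn.le, mul_comm]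
    exact mul_le_mul_of_nonneg_right habs hyn.le
  rw [hf, le_div_iff₀ hxn] at hnorm
  linarith

/-- Finite weak* approximation of any element of the dual ball by elements of the convex hull
of the orbit of `f`. -/
lemma lemB (hct : ConvexTransitive X) (f : StrongDual ℝ X) (hf : ‖f‖ = 1)
    (J : Finset X) (g₀ : StrongDual ℝ X) (hg₀ : ‖g₀‖ ≤ 1) (ε : ℝ) (hε : 0 < ε) :
    ∃ h ∈ convexHull ℝ {g : StrongDual ℝ X | ∃ T : X ≃ₗᵢ[ℝ] X,
        g = f.comp (T.toContinuousLinearEquiv : X →L[ℝ] X)},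
      ∀ x ∈ J, |h x - g₀ x| < ε := by
  classical
  set S : Set (StrongDual ℝ X) := {g : StrongDual ℝ X | ∃ T : X ≃ₗᵢ[ℝ] X,
      g = f.comp (T.toContinuousLinearEquiv : X →L[ℝ] X)} with hS
  let ι := {x : X // x ∈ J}
  let Φ : StrongDual ℝ X →ₗ[ℝ] (ι → ℝ) :=
    { toFun := fun g i => g (i : X)
      map_add' := fun g₁ g₂ => by ext i; simp
      map_smul' := fun r g => by ext i; simp }
  set K : Set (ι → ℝ) := Φ '' (convexHull ℝ S) with hK
  have hcl : Φ g₀ ∈ closure K := by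
    by_contra hc
    obtain ⟨φ, u, hsep, hu⟩ := geometric_hahn_banach_closed_point
      (((convex_convexHull ℝ S).linear_image Φ).closure) isClosed_closure hc
    set x₀ : X := ∑ i : ι, φ ((Pi.single i 1 : ι → ℝ)) • (i : X) with hx₀
    have key : ∀ g : StrongDual ℝ X, φ (Φ g) = g x₀ := by
      intro g
      have h1 : Φ g = ∑ i : ι, (g (i : X)) • ((Pi.single i 1 : ι → ℝ)) := by
        have := Finset.univ_sum_single (Φ g)
        rw [← this]
        refine Finset.sum_congr rfl fun i _ => ?_
        rw [← Pi.single_smul, smul_eq_mul, mul_one]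
        rfl
      rw [h1, map_sum, hx₀, map_sum]
      refine Finset.sum_congr rfl fun i _ => ?_
      rw [map_smul, map_smul, smul_eq_mul, smul_eq_mul, mul_comm]
    have hTu : ∀ T : X ≃ₗᵢ[ℝ] X, f (T x₀) ≤ u := by
      intro T
      have hmem : f.comp (T.toContinuousLinearEquiv : X →L[ℝ] X) ∈ convexHull ℝ S :=
        subset_convexHull ℝ S ⟨T, rfl⟩
      have := hsep _ (subset_closure (Set.mem_image_of_mem Φ hmem))
      rw [key] at this
      simpa using this.le
    have hx₀u : ‖x₀‖ ≤ u := lemA hct f hf x₀ u hTu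
    have hg₀u : g₀ x₀ ≤ u := by
      calc g₀ x₀ ≤ |g₀ x₀| := le_abs_self _
        _ ≤ ‖g₀‖ * ‖x₀‖ := g₀.le_opNorm x₀
        _ ≤ 1 * ‖x₀‖ := mul_le_mul_of_nonneg_right hg₀ (norm_nonneg _)
        _ = ‖x₀‖ := one_mul _
        _ ≤ u := hx₀u
    rw [key g₀] at hu
    linarith
  obtain ⟨b, hbK, hdist⟩ := Metric.mem_closure_iff.1 hcl ε hε
  obtain ⟨h, hh, rfl⟩ := hbK
  refine ⟨h, hh, fun x hx => ?_⟩
  have hle : dist (Φ g₀ ⟨x, hx⟩) (Φ h ⟨x, hx⟩) ≤ dist (Φ g₀) (Φ h) :=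
    dist_le_pi_dist (Φ g₀) (Φ h) ⟨x, hx⟩
  have : dist (g₀ x) (h x) < ε := lt_of_le_of_lt hle hdist
  rw [Real.dist_eq] at this
  calc |h x - g₀ x| = |g₀ x - h x| := abs_sub_comm _ _
    _ < ε := this

end Aux

theorem dual_convex_weakStar_transitive_of_convexTransitive
    (X : Type*) [NormedAddCommGroup X] [NormedSpace ℝ X] [CompleteSpace X]
    (hct : ConvexTransitive X) :
    ∀ f : StrongDual ℝ X, ‖f‖ = 1 →
      closure (StrongDual.toWeakDual '' (convexHull ℝ
          {g : StrongDual ℝ X | ∃ T : X ≃ₗᵢ[ℝ] X,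
            g = f.comp (T.toContinuousLinearEquiv : X →L[ℝ] X)})) =
        StrongDual.toWeakDual '' (closedBall (0 : StrongDual ℝ X) 1) := by
  classical
  intro f hf
  set S : Set (StrongDual ℝ X) := {g : StrongDual ℝ X | ∃ T : X ≃ₗᵢ[ℝ] X,
      g = f.comp (T.toContinuousLinearEquiv : X →L[ℝ] X)} with hS
  have himg : StrongDual.toWeakDual '' (closedBall (0 : StrongDual ℝ X) 1) =
      ⋂ y : X, {g : WeakDual ℝ X | ‖g y‖ ≤ ‖y‖} := by
    ext w
    simp only [Set.mem_iInter, Set.mem_setOf_eq, Set.mem_image, mem_closedBall_zero_iff]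
    constructor
    · rintro ⟨g, hg, rfl⟩ y
      calc ‖g y‖ ≤ ‖g‖ * ‖y‖ := g.le_opNorm y
        _ ≤ 1 * ‖y‖ := mul_le_mul_of_nonneg_right hg (norm_nonneg _)
        _ = ‖y‖ := one_mul _
    · intro hw
      exact ⟨WeakDual.toStrongDual w,
        ContinuousLinearMap.opNorm_le_bound _ zero_le_one
          (fun y => by simpa [one_mul] using hw y), rfl⟩
  apply subset_antisymm
  · refine closure_minimal (Set.image_mono ?_) (himg ▸ isClosed_iInter fun y =>
      isClosed_le (Continuous.norm (WeakDual.eval_continuous y)) continuous_const)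
    refine convexHull_min ?_ (convex_closedBall _ _)
    rintro g ⟨T, rfl⟩
    rw [mem_closedBall_zero_iff]
    refine ContinuousLinearMap.opNorm_le_bound _ zero_le_one fun y => ?_
    have : ‖f (T y)‖ ≤ ‖f‖ * ‖T y‖ := f.le_opNorm _
    simpa [hf, T.norm_map] using this
  · rintro w ⟨g₀, hg₀m, rfl⟩
    rw [mem_closedBall_zero_iff] at hg₀m
    have hemb : Topology.IsEmbedding (fun (x : WeakDual ℝ X) (y : X) => x y) :=
      WeakBilin.isEmbedding (B := topDualPairing ℝ X)
      ContinuousLinearMap.coe_injective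
    rw [hemb.toIsInducing.closure_eq_preimage_closure_image]
    apply mem_closure_iff_nhds.2
    intro V hV
    rw [nhds_pi, Filter.mem_pi] at hV
    obtain ⟨I, hIfin, t, ht, hsub⟩ := hV
    set J := hIfin.toFinset with hJdef
    have ht' : ∀ x ∈ J, ∃ d > 0, ball (g₀ x) d ⊆ t x := fun x _ =>
      Metric.mem_nhds_iff.1 (ht x)
    choose! d hd0 hdsub using ht'
    by_cases hJ : J.Nonempty
    · set ε := J.inf' hJ d with hεdef
      have hε : 0 < ε := (Finset.lt_inf'_iff hJ).2 hd0
      obtain ⟨h, hh, hhx⟩ := lemB hct f hf J g₀ hg₀m ε hε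
      refine ⟨_, hsub ?_, Set.mem_image_of_mem _ (Set.mem_image_of_mem _ hh)⟩
      intro x hxI
      have hxJ : x ∈ J := hIfin.mem_toFinset.2 hxI
      have : dist (h x) (g₀ x) < d x := by
        rw [Real.dist_eq]
        exact lt_of_lt_of_le (hhx x hxJ) (Finset.inf'_le d hxJ)
      exact hdsub x hxJ this
    · have hI : I = ∅ := by
        rw [Finset.not_nonempty_iff_eq_empty, hJdef, Set.Finite.toFinset_eq_empty] at hJ
        exact hJ
      have hfS : f ∈ convexHull ℝ S := by
        refine subset_convexHull ℝ S ⟨LinearIsometryEquiv.refl ℝ X, ?_⟩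
        ext y; simp
      refine ⟨_, hsub ?_, Set.mem_image_of_mem _ (Set.mem_image_of_mem _ hfS)⟩
      intro x hxI
      rw [hI] at hxI
      exact absurd hxI (Set.notMem_empty x)
end

section
/- Let X be a real Banach space, let f_1, ..., f_k be norm-one functionals in X*, and let beta_1, ..., beta_k be real numbers. Set V = {y in B_X : f_i(y) > beta_i for all 1 <= i <= k} and W = {F in B_{X**} : F(f_i) > beta_i for all 1 <= i <= k}, where X is identified with its canonical image in the bidual X**. Then the norm diameter of W equals the norm diameter of V. -/
open Metric NormedSpace

lemma goldstine_fin {X : Type*} [NormedAddCommGroup X] [NormedSpace ℝ X]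
    (F : StrongDual ℝ (StrongDual ℝ X)) (hF : ‖F‖ ≤ 1) (m : ℕ) (g : Fin m → StrongDual ℝ X)
    {ε : ℝ} (hε : 0 < ε) :
    ∃ x : X, ‖x‖ ≤ 1 ∧ ∀ j, |g j x - F (g j)| < ε := by
  classical
  set T : X →ₗ[ℝ] (Fin m → ℝ) := LinearMap.pi (fun j => (g j : X →ₗ[ℝ] ℝ)) with hT
  set s : Set (Fin m → ℝ) := closure (T '' closedBall 0 1) with hs
  set c : Fin m → ℝ := fun j => F (g j) with hc
  have hconv : Convex ℝ s := ((convex_closedBall (0:X) 1).linear_image T).closure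
  have hcs : c ∈ s := by
    by_contra hcs
    obtain ⟨φ, u, hφ, hu⟩ := geometric_hahn_banach_closed_point hconv isClosed_closure hcs
    set lam : Fin m → ℝ := fun j => φ (Pi.single j 1) with hlam
    have hrep : ∀ y : Fin m → ℝ, φ y = ∑ j, y j * lam j := by
      intro y
      have : y = ∑ j, y j • (Pi.single j (1:ℝ) : Fin m → ℝ) := by
        ext i; simp [Pi.single_apply]
      conv_lhs => rw [this]
      simp [hlam, mul_comm]
    set h : StrongDual ℝ X := ∑ j, lam j • g j with hh
    have hhx : ∀ x : X, h x = φ (T x) := by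
      intro x
      rw [hrep]
      simp [hh, hT, mul_comm]
    have hFh : F h = φ c := by
      rw [hrep]
      simp [hh, hc, mul_comm]
    have hball : ∀ x : X, ‖x‖ ≤ 1 → h x < u := by
      intro x hx
      rw [hhx]
      exact hφ _ (subset_closure ⟨x, by simpa using hx, rfl⟩)
    have hu0 : 0 < u := by simpa using hball 0 (by simp)
    have hnorm : ‖h‖ ≤ u := by
      refine ContinuousLinearMap.opNorm_le_bound h hu0.le fun x => ?_
      rcases eq_or_ne x 0 with rfl | hx0
      · simp [hu0.le]
      · have hxpos : (0:ℝ) < ‖x‖ := norm_pos_iff.mpr hx0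
        have h1 : h (‖x‖⁻¹ • x) < u := hball _ (by
          rw [norm_smul, norm_inv, norm_norm, inv_mul_cancel₀ hxpos.ne'])
        have h2 : h (-(‖x‖⁻¹ • x)) < u := hball _ (by
          rw [norm_neg, norm_smul, norm_inv, norm_norm, inv_mul_cancel₀ hxpos.ne'])
        rw [map_neg] at h2
        have habs : |h (‖x‖⁻¹ • x)| ≤ u := abs_le.2 ⟨by linarith, h1.le⟩
        have : |h x| = ‖x‖ * |h (‖x‖⁻¹ • x)| := by
          rw [map_smul, smul_eq_mul, abs_mul, abs_inv, abs_norm,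
            ← mul_assoc, mul_inv_cancel₀ hxpos.ne', one_mul]
        rw [Real.norm_eq_abs, this, mul_comm]
        exact mul_le_mul_of_nonneg_right habs hxpos.le
    have : F h ≤ u := by
      calc F h ≤ ‖F h‖ := le_abs_self _
        _ ≤ ‖F‖ * ‖h‖ := F.le_opNorm h
        _ ≤ 1 * u := mul_le_mul hF hnorm (norm_nonneg _) zero_le_one
        _ = u := one_mul u
    rw [hFh] at this
    exact absurd hu (not_lt.2 this)
  obtain ⟨b, hb, hbc⟩ := Metric.mem_closure_iff.mp hcs ε hε
  obtain ⟨x, hx, rfl⟩ := hb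
  refine ⟨x, by simpa using hx, fun j => ?_⟩
  have := dist_le_pi_dist (T x) c j
  rw [dist_comm] at hbc
  have : dist (T x j) (c j) < ε := lt_of_le_of_lt this hbc
  simpa [hT, hc, Real.dist_eq] using this

theorem diam_bidual_intersection_of_slices_eq
    (X : Type*) [NormedAddCommGroup X] [NormedSpace ℝ X] [CompleteSpace X]
    (k : ℕ) (f : Fin k → StrongDual ℝ X) (hf : ∀ i, ‖f i‖ = 1) (β : Fin k → ℝ) :
    diam {F ∈ closedBall (0 : StrongDual ℝ (StrongDual ℝ X)) 1 | ∀ i, F (f i) > β i} =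
      diam {y ∈ closedBall (0 : X) 1 | ∀ i, f i y > β i} := by
  classical
  set W := {F ∈ closedBall (0 : StrongDual ℝ (StrongDual ℝ X)) 1 | ∀ i, F (f i) > β i} with hWdef
  set V := {y ∈ closedBall (0 : X) 1 | ∀ i, f i y > β i} with hVdef
  set ι : X →ₗᵢ[ℝ] StrongDual ℝ (StrongDual ℝ X) := inclusionInDoubleDualLi ℝ with hι
  have hWb : Bornology.IsBounded W := (Metric.isBounded_closedBall).subset (fun F hF => hF.1)
  have hVb : Bornology.IsBounded V := (Metric.isBounded_closedBall).subset (fun y hy => hy.1)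
  -- approximate elements of W by elements of V
  have key : ∀ F ∈ W, ∀ φ : StrongDual ℝ X, ∀ ε > 0, ∃ x ∈ V, |φ x - F φ| < ε := by
    intro F hF φ ε hε
    set ε' : Fin (k+1) → ℝ := Fin.snoc (fun i => F (f i) - β i) ε with hε'
    have hε'pos : ∀ j, 0 < ε' j := by
      refine Fin.lastCases ?_ ?_ <;> simp [hε', hε]
      intro i; linarith [hF.2 i]
    set ε₀ : ℝ := Finset.univ.inf' ⟨0, Finset.mem_univ _⟩ ε' with hε₀
    have hε₀pos : 0 < ε₀ := (Finset.lt_inf'_iff _).2 fun j _ => hε'pos j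
    have hε₀le : ∀ j, ε₀ ≤ ε' j := fun j => Finset.inf'_le _ (Finset.mem_univ j)
    obtain ⟨x, hx1, hx2⟩ := goldstine_fin F ((mem_closedBall_zero_iff (E := StrongDual ℝ (StrongDual ℝ X))).mp hF.1) (k+1)
      (Fin.snoc f φ) hε₀pos
    refine ⟨x, ⟨by simpa using hx1, fun i => ?_⟩, ?_⟩
    · have h1 := hx2 i.castSucc
      have h2 := hε₀le i.castSucc
      simp only [Fin.snoc_castSucc] at h1 h2
      have := abs_lt.mp h1
      simp only [hε', Fin.snoc_castSucc] at h2
      linarith [this.1]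
    · have h1 := hx2 (Fin.last k)
      have h2 := hε₀le (Fin.last k)
      simp only [Fin.snoc_last] at h1
      simp only [hε', Fin.snoc_last] at h2
      exact lt_of_lt_of_le h1 h2
  apply le_antisymm
  · -- diam W ≤ diam V
    refine diam_le_of_forall_dist_le diam_nonneg fun F hF G hG => ?_
    refine le_of_forall_pos_le_add fun ε hε => ?_
    have hε3 : 0 < ε/3 := by linarith
    -- choose a norming functional for F - G
    obtain ⟨φ, hφ1, hφ2⟩ : ∃ φ : StrongDual ℝ X, ‖φ‖ ≤ 1 ∧ ‖F - G‖ - ε/3 < (F - G) φ := by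
      rcases lt_or_ge (‖F - G‖ - ε/3) 0 with h | h
      · exact ⟨0, by simp, by simpa using h⟩
      · obtain ⟨φ, hφ, hφ'⟩ := (F - G).exists_lt_apply_of_lt_opNorm
          (show ‖F - G‖ - ε/3 < ‖F - G‖ by linarith)
        rcases abs_cases ((F - G) φ) with ⟨he, _⟩ | ⟨he, _⟩
        · exact ⟨φ, hφ.le, by rwa [Real.norm_eq_abs, he] at hφ'⟩
        · refine ⟨-φ, by simpa using hφ.le, ?_⟩
          rw [map_neg]
          rwa [Real.norm_eq_abs, he] at hφ'
    obtain ⟨x, hxV, hx⟩ := key F hF φ (ε/3) hε3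
    obtain ⟨y, hyV, hy⟩ := key G hG φ (ε/3) hε3
    have hxy : dist x y ≤ diam V := dist_le_diam_of_mem hVb hxV hyV
    have hφxy : φ x - φ y ≤ ‖x - y‖ := by
      calc φ x - φ y = φ (x - y) := by rw [map_sub]
        _ ≤ ‖φ (x - y)‖ := le_abs_self _
        _ ≤ ‖φ‖ * ‖x - y‖ := φ.le_opNorm _
        _ ≤ 1 * ‖x - y‖ := mul_le_mul_of_nonneg_right hφ1 (norm_nonneg _)
        _ = ‖x - y‖ := one_mul _
    obtain ⟨habs1, habs1'⟩ := abs_lt.mp hx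
    obtain ⟨habs2, habs2'⟩ := abs_lt.mp hy
    have : dist F G = ‖F - G‖ := dist_eq_norm F G
    rw [this]
    have hsub : (F - G) φ = F φ - G φ := by simp
    rw [dist_eq_norm] at hxy
    linarith
  · -- diam V ≤ diam W
    have himg : ι '' V ⊆ W := by
      rintro _ ⟨x, hx, rfl⟩
      refine ⟨?_, fun i => ?_⟩
      · exact (mem_closedBall_zero_iff (E := StrongDual ℝ (StrongDual ℝ X))).mpr (by rw [ι.norm_map]; exact mem_closedBall_zero_iff.mp hx.1)
      · simpa [hι, NormedSpace.inclusionInDoubleDualLi, NormedSpace.dual_def] using hx.2 i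
    calc diam V = diam (ι '' V) := (ι.isometry.diam_image V).symm
      _ ≤ diam W := diam_mono himg hWb
end

section
/- Let X be a real Banach space, k in N, and for 1 <= i <= k let f_i in X* have norm one, delta_i in (0,1), and c_i in (0,1]. Let w in B_X satisfy f_i(w) > 1 - c_i*delta_i for all i, and let (x_n) be a sequence in the unit sphere S_X. Suppose (a^(j))_{j in N} is a sequence of nonnegative summable coefficient sequences with sum_n a^(j)_n = 1 for each j and || sum_n a^(j)_n x_n - w || -> 0 as j -> infinity. Then for each 1 <= i <= k, limsup_{j -> infinity} sum_{n not in K_i} a^(j)_n < c_i, where K_i = {n in N : f_i(x_n) > 1 - delta_i}. -/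
open Metric Filter Topology NormedSpace

theorem limsup_tail_coefficients_lt
    (X : Type*) [NormedAddCommGroup X] [NormedSpace ℝ X] [CompleteSpace X]
    (k : ℕ) (f : Fin k → StrongDual ℝ X) (hf : ∀ i, ‖f i‖ = 1)
    (δ : Fin k → ℝ) (hδ : ∀ i, δ i ∈ Set.Ioo (0 : ℝ) 1)
    (c : Fin k → ℝ) (hc : ∀ i, c i ∈ Set.Ioc (0 : ℝ) 1)
    (w : X) (hw : w ∈ closedBall (0 : X) 1) (hfw : ∀ i, f i w > 1 - c i * δ i)
    (x : ℕ → X) (hx : ∀ n, ‖x n‖ = 1)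
    (a : ℕ → ℕ → ℝ) (ha0 : ∀ j n, 0 ≤ a j n) (ha1 : ∀ j, HasSum (a j) 1)
    (hconv : ∀ j, Summable (fun n => a j n • x n))
    (hlim : Tendsto (fun j => ‖(∑' n, a j n • x n) - w‖) atTop (𝓝 0)) :
    ∀ i, limsup (fun j => ∑' n : {n : ℕ // ¬ f i (x n) > 1 - δ i}, a j n) atTop < c i := by
  intro i
  obtain ⟨hδ0, hδ1⟩ := hδ i
  obtain ⟨hc0, hc1⟩ := hc i
  set fi := f i with hfi
  have hfx : ∀ n, |fi (x n)| ≤ 1 := by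
    intro n
    have := (fi).le_opNorm (x n)
    rw [hx n, hf i, one_mul] at this
    simpa using this
  set S : ℕ → X := fun j => ∑' n, a j n • x n with hS
  -- summabilities
  have hsa : ∀ j, Summable (a j) := fun j => (ha1 j).summable
  have hsF : ∀ j, Summable (fun n => a j n * fi (x n)) := by
    intro j
    apply Summable.of_norm_bounded (hsa j)
    intro n
    rw [Real.norm_eq_abs, abs_mul, abs_of_nonneg (ha0 j n)]
    nlinarith [hfx n, abs_nonneg (fi (x n)), ha0 j n]
  have hsG : ∀ j, Summable (fun n => a j n * (1 - fi (x n))) := by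
    intro j
    have : (fun n => a j n * (1 - fi (x n))) = fun n => a j n - a j n * fi (x n) := by
      funext n; ring
    rw [this]
    exact (hsa j).sub (hsF j)
  have hGnn : ∀ j n, 0 ≤ a j n * (1 - fi (x n)) := by
    intro j n
    apply mul_nonneg (ha0 j n)
    have := (abs_le.mp (hfx n)).2
    linarith
  -- key identity: 1 - fi (S j) = ∑' a j n * (1 - fi (x n))
  have hkey : ∀ j, 1 - fi (S j) = ∑' n, a j n * (1 - fi (x n)) := by
    intro j
    have h1 : fi (S j) = ∑' n, a j n * fi (x n) := by
      rw [hS]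
      rw [ContinuousLinearMap.map_tsum fi (hconv j)]
      simp [smul_eq_mul]
    have h2 : (1 : ℝ) = ∑' n, a j n := (ha1 j).tsum_eq.symm
    rw [h1]
    conv_lhs => rw [h2]
    rw [← Summable.tsum_sub (hsa j) (hsF j)]
    congr 1; funext n; ring
  set K : Set ℕ := {n : ℕ | ¬ fi (x n) > 1 - δ i} with hK
  set t : ℕ → ℝ := fun j => ∑' n : {n : ℕ // ¬ fi (x n) > 1 - δ i}, a j n with ht
  -- t j ≥ 0
  have htnn : ∀ j, 0 ≤ t j := fun j => tsum_nonneg (fun n => ha0 j n)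
  -- δ i * t j ≤ 1 - fi (S j)
  have hmain : ∀ j, δ i * t j ≤ 1 - fi (S j) := by
    intro j
    rw [hkey j]
    have hsub : Summable (fun n : {n : ℕ // ¬ fi (x n) > 1 - δ i} => a j n) :=
      (hsa j).subtype _
    have hsubG : Summable (fun n : {n : ℕ // ¬ fi (x n) > 1 - δ i} =>
        a j (n : ℕ) * (1 - fi (x n))) := (hsG j).subtype _
    calc δ i * t j = ∑' n : {n : ℕ // ¬ fi (x n) > 1 - δ i}, δ i * a j n := by
          rw [ht, tsum_mul_left]
      _ ≤ ∑' n : {n : ℕ // ¬ fi (x n) > 1 - δ i}, a j (n : ℕ) * (1 - fi (x n)) := by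
          apply Summable.tsum_le_tsum _ (hsub.mul_left _) hsubG
          intro n
          have hn : fi (x n) ≤ 1 - δ i := not_lt.mp n.2
          nlinarith [ha0 j (n : ℕ)]
      _ ≤ ∑' n, a j n * (1 - fi (x n)) := by
          exact Summable.tsum_subtype_le _ _ (hGnn j) (hsG j)
  -- fi (S j) → fi w
  have hSw : Tendsto S atTop (𝓝 w) := by
    rw [tendsto_iff_norm_sub_tendsto_zero]
    exact hlim
  have hfS : Tendsto (fun j => fi (S j)) atTop (𝓝 (fi w)) :=
    (fi.continuous.tendsto w).comp hSw
  have hu : Tendsto (fun j => (1 - fi (S j)) / δ i) atTop (𝓝 ((1 - fi w) / δ i)) := by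
    apply Tendsto.div_const
    exact tendsto_const_nhds.sub hfS
  have hL : (1 - fi w) / δ i < c i := by
    rw [div_lt_iff₀ hδ0]
    have := hfw i
    rw [← hfi] at this
    linarith
  set m : ℝ := ((1 - fi w) / δ i + c i) / 2 with hm
  have hLm : (1 - fi w) / δ i < m := by rw [hm]; linarith
  have hmc : m < c i := by rw [hm]; linarith
  have hev : ∀ᶠ j in atTop, t j ≤ m := by
    filter_upwards [hu.eventually_lt_const hLm] with j hj
    have h1 : δ i * t j ≤ 1 - fi (S j) := hmain j
    have h2 : (1 - fi (S j)) / δ i < m := hj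
    rw [div_lt_iff₀ hδ0] at h2
    nlinarith
  calc limsup t atTop ≤ m := by
        apply limsup_le_of_le _ hev
        exact isCoboundedUnder_le_of_le atTop htnn
    _ < c i := hmc
end

section
/- Let X be a real convex-transitive Banach space, x a point of the unit sphere S_X, k in N, and for 1 <= i <= k let f_i in X* have norm one, delta_i in (0,1), and c_i in (0,1] with c_1 + ... + c_k = 1. Suppose there exists w in B_X with f_i(w) > 1 - c_i*delta_i for all 1 <= i <= k. Then there exists a surjective linear isometry T of X such that f_i(T(x)) > 1 - delta_i for all 1 <= i <= k. -/
open Metric NormedSpace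

theorem exists_isometry_into_slices_of_convexTransitive
    (X : Type*) [NormedAddCommGroup X] [NormedSpace ℝ X] [CompleteSpace X]
    (hct : ConvexTransitive X) (x : X) (hx : ‖x‖ = 1)
    (k : ℕ) (f : Fin k → StrongDual ℝ X) (hf : ∀ i, ‖f i‖ = 1)
    (δ : Fin k → ℝ) (hδ : ∀ i, δ i ∈ Set.Ioo (0 : ℝ) 1)
    (c : Fin k → ℝ) (hc : ∀ i, c i ∈ Set.Ioc (0 : ℝ) 1) (hcsum : ∑ i, c i = 1)
    (w : X) (hw : w ∈ closedBall (0 : X) 1) (hfw : ∀ i, f i w > 1 - c i * δ i) :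
    ∃ T : X ≃ₗᵢ[ℝ] X, ∀ i, f i (T x) > 1 - δ i := by
  rcases Nat.eq_zero_or_pos k with hk | hk
  · subst hk
    exact ⟨LinearIsometryEquiv.refl ℝ X, fun i => i.elim0⟩
  by_contra hcon
  push_neg at hcon
  -- The "bad" set `A`
  set Δ : Set (Fin k → ℝ) := stdSimplex ℝ (Fin k) with hΔ
  set A : Set X := {z | ∃ l ∈ Δ, ∀ i, f i z ≤ 1 - l i * δ i} with hA
  -- A is convex
  have hAconv : Convex ℝ A := by
    rintro z ⟨l, hl, hlz⟩ z' ⟨l', hl', hlz'⟩ a b ha hb hab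
    refine ⟨a • l + b • l', (convex_stdSimplex ℝ (Fin k)) hl hl' ha hb hab, fun i => ?_⟩
    have h1 := hlz i
    have h2 := hlz' i
    simp only [map_add, map_smul, smul_eq_mul, Pi.add_apply, Pi.smul_apply]
    nlinarith [mul_le_mul_of_nonneg_left h1 ha, mul_le_mul_of_nonneg_left h2 hb]
  -- A is closed
  have hAclosed : IsClosed A := by
    have hcs : CompactSpace Δ := isCompact_iff_compactSpace.mp (isCompact_stdSimplex ℝ (Fin k))
    have : A = Prod.snd '' {p : Δ × X | ∀ i, f i p.2 ≤ 1 - (p.1 : Fin k → ℝ) i * δ i} := by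
      ext z
      constructor
      · rintro ⟨l, hl, h⟩; exact ⟨(⟨l, hl⟩, z), h, rfl⟩
      · rintro ⟨⟨l, z'⟩, h, rfl⟩; exact ⟨l.1, l.2, h⟩
    rw [this]
    refine isClosedMap_snd_of_compactSpace _ ?_
    have : {p : Δ × X | ∀ i, f i p.2 ≤ 1 - (p.1 : Fin k → ℝ) i * δ i} =
        ⋂ i, {p : Δ × X | f i p.2 ≤ 1 - (p.1 : Fin k → ℝ) i * δ i} := by
      ext p; simp
    rw [this]
    refine isClosed_iInter fun i => ?_
    have hc1 : Continuous fun p : Δ × X => f i p.2 :=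
      (f i).continuous.comp continuous_snd
    have hc2 : Continuous fun p : Δ × X => 1 - (p.1 : Fin k → ℝ) i * δ i := by
      refine continuous_const.sub (Continuous.mul ?_ continuous_const)
      exact (continuous_apply i).comp (continuous_subtype_val.comp continuous_fst)
    exact isClosed_le hc1 hc2
  -- the orbit is contained in A
  have horb : isometryOrbit X x ⊆ A := by
    rintro y ⟨T, rfl⟩
    obtain ⟨i0, hi0⟩ := hcon T
    refine ⟨fun j => if j = i0 then 1 else 0, ?_, fun i => ?_⟩
    · refine ⟨fun j => by positivity, ?_⟩
      simp [Finset.sum_ite_eq']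
    · by_cases h : i = i0
      · subst h; simpa using hi0
      · have hTx : ‖T x‖ = 1 := by rw [T.norm_map]; exact hx
        have : f i (T x) ≤ ‖f i‖ * ‖T x‖ :=
          le_trans (le_abs_self _) ((f i).le_opNorm _)
        rw [hf i, hTx] at this
        simp [h]
        linarith
  -- hence the closed unit ball is contained in A
  have hball : closedBall (0 : X) 1 ⊆ A := by
    rw [← hct x hx]
    exact closure_minimal (convexHull_min horb hAconv) hAclosed
  obtain ⟨l, hl, hlw⟩ := hball hw
  -- each l i < c i
  have hlt : ∀ i, l i < c i := by
    intro i
    have h1 := hlw i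
    have h2 := hfw i
    have hδi := (hδ i).1
    nlinarith
  have : ∑ i, l i < ∑ i, c i :=
    Finset.sum_lt_sum_of_nonempty (Finset.univ_nonempty_iff.mpr (Fin.pos_iff_nonempty.mp hk))
      (fun i _ => hlt i)
  rw [hl.2, hcsum] at this
  exact lt_irrefl _ this
end

section
/- Let X be a real convex-transitive Banach space such that for every eps > 0 there exist k in N, delta_1, ..., delta_k in (0,1), c_1, ..., c_k in (0,1] with c_1 + ... + c_k = 1, and norm-one functionals f_1, ..., f_k in X* satisfying: (1) {y in B_X : f_i(y) > 1 - c_i*delta_i for all 1 <= i <= k} is nonempty, and (2) diam({y in B_X : f_i(y) > 1 - 2*delta_i for all 1 <= i <= k}) < eps. Then every point x of the unit sphere S_X is an extreme point of the closed unit ball of the bidual X** (under the canonical embedding of X into X**). -/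
open Metric NormedSpace

set_option maxHeartbeats 2000000 in

/-- Helly/Goldstine-type approximation: a bidual element of norm ≤ 1 can be approximated
on finitely many functionals by elements of the ball of radius `1+η`. -/
lemma helly_approx {X : Type*} [NormedAddCommGroup X] [NormedSpace ℝ X]
    {n : ℕ} (hf : Fin n → StrongDual ℝ X) (G : StrongDual ℝ (StrongDual ℝ X)) (hG : ‖G‖ ≤ 1)
    {η : ℝ} (hη : 0 < η) {η' : ℝ} (hη' : 0 < η') :
    ∃ u : X, ‖u‖ ≤ 1 + η ∧ ∀ m, |hf m u - G (hf m)| < η' := by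
  classical
  set Φ : X →L[ℝ] (Fin n → ℝ) := ContinuousLinearMap.pi (fun m => hf m) with hΦ
  set C : Set (Fin n → ℝ) := Φ '' (closedBall 0 (1 + η)) with hC
  set a : Fin n → ℝ := fun m => G (hf m) with ha
  have hmem : a ∈ closure C := by
    by_contra hna
    obtain ⟨φ, u', hlt, hgt⟩ := geometric_hahn_banach_closed_point
      (s := closure C) ((convex_closedBall (0:X) (1+η)).linear_image Φ.toLinearMap).closure
      isClosed_closure hna
    -- u' > 0 since 0 ∈ C
    have h0C : (0 : Fin n → ℝ) ∈ C := by
      refine ⟨0, ?_, by simp⟩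
      simp [mem_closedBall]; positivity
    have hu'pos : 0 < u' := by
      have := hlt 0 (subset_closure h0C)
      simpa using this
    -- the functional φ∘Φ as an element of the dual
    set g : StrongDual ℝ X := ∑ m, φ ((Pi.single m 1 : Fin n → ℝ)) • hf m with hg
    have hgw : ∀ w : X, g w = φ (Φ w) := by
      intro w
      have h1 : Φ w = ∑ m, Pi.single m (hf m w) := by
        rw [Finset.univ_sum_single (fun m => hf m w)]
        rfl
      rw [h1, map_sum]
      simp only [hg, ContinuousLinearMap.sum_apply, ContinuousLinearMap.smul_apply,
        smul_eq_mul]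
      refine Finset.sum_congr rfl fun m _ => ?_
      have : Pi.single m (hf m w) = (hf m w) • (Pi.single m 1 : Fin n → ℝ) := by
        rw [← Pi.single_smul, smul_eq_mul, mul_one]
      rw [this, map_smul, smul_eq_mul]
      ring
    have hGg : G g = φ a := by
      have h1 : a = ∑ m, Pi.single m (a m) := (Finset.univ_sum_single a).symm
      rw [hg, map_sum, h1, map_sum]
      refine Finset.sum_congr rfl fun m _ => ?_
      have : Pi.single m (a m) = (a m) • (Pi.single m 1 : Fin n → ℝ) := by
        rw [← Pi.single_smul, smul_eq_mul, mul_one]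
      rw [this, map_smul, map_smul, smul_eq_mul, smul_eq_mul]
      simp [ha]; ring
    -- bound on ‖g‖
    have hgball : ∀ w : X, ‖w‖ ≤ 1 + η → g w < u' := by
      intro w hw
      rw [hgw]
      exact hlt _ (subset_closure ⟨w, by simpa [mem_closedBall] using hw, rfl⟩)
    have habs : ∀ w : X, ‖w‖ ≤ 1 + η → |g w| ≤ u' := by
      intro w hw
      have h1 : g w < u' := hgball w hw
      have h2 : g (-w) < u' := hgball (-w) (by simpa using hw)
      rw [abs_le]
      constructor
      · have h3 : -(g w) = g (-w) := by simp
        linarith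
      · linarith
    have hgnorm : ‖g‖ ≤ u' / (1 + η) := by
      apply ContinuousLinearMap.opNorm_le_bound _ (by positivity)
      intro w
      rcases eq_or_ne w 0 with rfl | hw0
      · simp
      · have hnw : (0:ℝ) < ‖w‖ := norm_pos_iff.mpr hw0
        set s : ℝ := (1 + η) / ‖w‖ with hs
        have hspos : 0 < s := by positivity
        have hws : ‖s • w‖ = 1 + η := by
          rw [norm_smul, Real.norm_eq_abs, abs_of_pos hspos, hs]
          field_simp
        have h1 : |g (s • w)| ≤ u' := habs _ hws.le
        have h2 : g (s • w) = s * g w := by rw [map_smul, smul_eq_mul]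
        rw [h2, abs_mul, abs_of_pos hspos, hs] at h1
        rw [Real.norm_eq_abs]
        rw [div_mul_eq_mul_div, le_div_iff₀ (by linarith : (0:ℝ) < 1 + η)]
        calc |g w| * (1 + η) = (1 + η) / ‖w‖ * |g w| * ‖w‖ := by field_simp
          _ ≤ u' * ‖w‖ := by nlinarith [norm_nonneg w]
    have hcontra : φ a ≤ u' / (1 + η) := by
      rw [← hGg]
      calc G g ≤ |G g| := le_abs_self _
        _ ≤ ‖G‖ * ‖g‖ := by
            have := G.le_opNorm g
            simpa [Real.norm_eq_abs] using this
        _ ≤ 1 * (u' / (1 + η)) := by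
            apply mul_le_mul hG hgnorm (norm_nonneg g) zero_le_one
        _ = u' / (1 + η) := one_mul _
    have hfin : u' / (1 + η) < u' := by
      rw [div_lt_iff₀ (by linarith : (0:ℝ) < 1 + η)]
      have := mul_lt_mul_of_pos_left (show (1:ℝ) < 1 + η by linarith) hu'pos
      linarith
    linarith
  -- extract approximation
  rw [Metric.mem_closure_iff] at hmem
  obtain ⟨b, hbC, hdist⟩ := hmem η' hη'
  obtain ⟨u, huball, rfl⟩ := hbC
  refine ⟨u, by simpa [mem_closedBall] using huball, fun m => ?_⟩
  have := (dist_pi_lt_iff hη').mp (dist_comm a (Φ u) ▸ hdist) m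
  have hΦm : Φ u m = hf m u := rfl
  rw [Real.dist_eq, hΦm] at this
  simpa [ha, abs_sub_comm] using this



lemma exists_good_point {X : Type*} [NormedAddCommGroup X] [NormedSpace ℝ X]
    {k : ℕ} (δ c : Fin k → ℝ) (f : Fin k → StrongDual ℝ X)
    (hδ : ∀ i, δ i ∈ Set.Ioo (0:ℝ) 1) (hcsum : ∑ i, c i = 1)
    (hnorm : ∀ i, ‖f i‖ = 1)
    {ι : Type*} (t : Finset ι) (w : ι → ℝ) (zf : ι → X)
    (hw0 : ∀ j ∈ t, 0 ≤ w j) (hw1 : ∑ j ∈ t, w j = 1)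
    (hz1 : ∀ j ∈ t, ‖zf j‖ = 1)
    {y : X} {θ : ℝ} (hθ : 0 < θ)
    (hyz : ‖y - ∑ j ∈ t, w j • zf j‖ ≤ θ / 2)
    (hy : ∀ i, f i y ≥ 1 - c i * δ i + θ) :
    ∃ j ∈ t, ∀ i, f i (zf j) > 1 - δ i := by
  classical
  by_contra hbad
  push_neg at hbad
  -- hbad : ∀ j ∈ t, ∃ i, f i (zf j) ≤ 1 - δ i
  set z : X := ∑ j ∈ t, w j • zf j with hz
  have hk : 0 < k := by
    by_contra hk0
    push_neg at hk0
    interval_cases k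
    simp at hcsum
  have hfz1 : ∀ i, ∀ j ∈ t, f i (zf j) ≤ 1 := by
    intro i j hj
    calc f i (zf j) ≤ |f i (zf j)| := le_abs_self _
      _ ≤ ‖f i‖ * ‖zf j‖ := by simpa [Real.norm_eq_abs] using (f i).le_opNorm (zf j)
      _ = 1 := by rw [hnorm i, hz1 j hj, mul_one]
  set μ : Fin k → ℝ := fun i => ∑ j ∈ t.filter (fun j => f i (zf j) ≤ 1 - δ i), w j with hμ
  -- each μ i < c i
  have hμlt : ∀ i, μ i < c i := by
    intro i
    have hδi := hδ i
    have hfi : f i z = ∑ j ∈ t, w j * f i (zf j) := by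
      rw [hz, map_sum]
      simp [smul_eq_mul]
    have h1 : δ i * μ i ≤ ∑ j ∈ t, w j * (1 - f i (zf j)) := by
      have hsub : ∀ j ∈ t.filter (fun j => f i (zf j) ≤ 1 - δ i),
          δ i * w j ≤ w j * (1 - f i (zf j)) := by
        intro j hj
        rw [Finset.mem_filter] at hj
        have := hw0 j hj.1
        nlinarith [hj.2]
      calc δ i * μ i = ∑ j ∈ t.filter (fun j => f i (zf j) ≤ 1 - δ i), δ i * w j := by
            rw [hμ, Finset.mul_sum]
        _ ≤ ∑ j ∈ t.filter (fun j => f i (zf j) ≤ 1 - δ i), w j * (1 - f i (zf j)) :=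
            Finset.sum_le_sum hsub
        _ ≤ ∑ j ∈ t, w j * (1 - f i (zf j)) := by
            apply Finset.sum_le_sum_of_subset_of_nonneg (Finset.filter_subset _ _)
            intro j hj _
            have h2 := hfz1 i j hj
            have h3 := hw0 j hj
            nlinarith
    have h2 : ∑ j ∈ t, w j * (1 - f i (zf j)) = 1 - f i z := by
      rw [hfi]
      have : ∀ j ∈ t, w j * (1 - f i (zf j)) = w j - w j * f i (zf j) := by
        intro j _; ring
      rw [Finset.sum_congr rfl this, Finset.sum_sub_distrib, hw1]
    have h3 : f i z ≥ f i y - θ / 2 := by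
      have habs : |f i (y - z)| ≤ θ / 2 := by
        calc |f i (y - z)| ≤ ‖f i‖ * ‖y - z‖ := by
              simpa [Real.norm_eq_abs] using (f i).le_opNorm (y - z)
          _ ≤ 1 * (θ/2) := by rw [hnorm i, one_mul]; simpa using hyz
          _ = θ/2 := one_mul _
      have : f i y - f i z = f i (y - z) := by rw [map_sub]
      have := abs_le.mp habs
      linarith [this.1, this.2]
    have h4 : δ i * μ i ≤ c i * δ i - θ / 2 := by
      have := hy i
      linarith
    have h5 : δ i * μ i < δ i * c i := by
      nlinarith [hδi.1]
    exact lt_of_mul_lt_mul_left h5 hδi.1.le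
  -- but ∑ μ ≥ 1
  have hμsum : (1:ℝ) ≤ ∑ i, μ i := by
    have hstep : ∀ j ∈ t, w j ≤ ∑ i, (if f i (zf j) ≤ 1 - δ i then w j else 0) := by
      intro j hj
      obtain ⟨i₀, hi₀⟩ := hbad j hj
      have : (if f i₀ (zf j) ≤ 1 - δ i₀ then w j else 0) = w j := by rw [if_pos hi₀]
      calc w j = (if f i₀ (zf j) ≤ 1 - δ i₀ then w j else 0) := this.symm
        _ ≤ ∑ i, (if f i (zf j) ≤ 1 - δ i then w j else 0) := by
            apply Finset.single_le_sum (f := fun i => if f i (zf j) ≤ 1 - δ i then w j else 0)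
              (fun i _ => by by_cases hcase : f i (zf j) ≤ 1 - δ i <;>
                simp [hcase, hw0 j hj]) (Finset.mem_univ i₀)
    calc (1:ℝ) = ∑ j ∈ t, w j := hw1.symm
      _ ≤ ∑ j ∈ t, ∑ i, (if f i (zf j) ≤ 1 - δ i then w j else 0) :=
          Finset.sum_le_sum hstep
      _ = ∑ i, ∑ j ∈ t, (if f i (zf j) ≤ 1 - δ i then w j else 0) := Finset.sum_comm
      _ = ∑ i, μ i := by
          refine Finset.sum_congr rfl fun i _ => ?_
          simp only [hμ]
          rw [Finset.sum_filter]
  have : ∑ i, μ i < ∑ i, c i :=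
    Finset.sum_lt_sum_of_nonempty (Finset.univ_nonempty_iff.mpr
      (Fin.pos_iff_nonempty.mp hk)) (fun i _ => hμlt i)
  rw [hcsum] at this
  linarith


set_option maxHeartbeats 2000000 in
lemma one_sided_estimate
    (X : Type*) [NormedAddCommGroup X] [NormedSpace ℝ X] [CompleteSpace X]
    (hct : ConvexTransitive X)
    (h : ∀ ε : ℝ, 0 < ε → ∃ (k : ℕ) (δ : Fin k → ℝ) (c : Fin k → ℝ) (f : Fin k → StrongDual ℝ X),
      (∀ i, δ i ∈ Set.Ioo (0 : ℝ) 1) ∧ (∀ i, c i ∈ Set.Ioc (0 : ℝ) 1) ∧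
      (∑ i, c i = 1) ∧ (∀ i, ‖f i‖ = 1) ∧
      ({y ∈ closedBall (0 : X) 1 | ∀ i, f i y > 1 - c i * δ i}).Nonempty ∧
      diam {y ∈ closedBall (0 : X) 1 | ∀ i, f i y > 1 - 2 * δ i} < ε)
    (x : X) (hx : ‖x‖ = 1) :
    ∀ G' H' : StrongDual ℝ (StrongDual ℝ X), ‖G'‖ ≤ 1 → ‖H'‖ ≤ 1 →
      (∀ φ : StrongDual ℝ X, G' φ + H' φ = 2 * φ x) →
      ∀ f : StrongDual ℝ X, ‖f‖ ≤ 1 → ∀ ε : ℝ, 0 < ε → G' f - H' f ≤ 4 * ε := by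
  intro G' H' hG' hH' hpair f hf ε hε
  classical
  obtain ⟨k, δ, c, fs, hδ, hc, hcsum, hnorm, ⟨y, hy⟩, hdiam⟩ := h ε hε
  have hk : 0 < k := by
    by_contra hk0
    push_neg at hk0
    interval_cases k
    simp at hcsum
  have hne : (Finset.univ : Finset (Fin k)).Nonempty :=
    Finset.univ_nonempty_iff.mpr (Fin.pos_iff_nonempty.mp hk)
  obtain ⟨hyball, hyslice⟩ := hy
  -- margin θ
  set θ : ℝ := Finset.univ.inf' hne (fun i => fs i y - (1 - c i * δ i)) with hθdef
  have hθ : 0 < θ := by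
    rw [hθdef, Finset.lt_inf'_iff]
    intro i _
    have := hyslice i
    linarith
  have hyθ : ∀ i, fs i y ≥ 1 - c i * δ i + θ := by
    intro i
    have := Finset.inf'_le (fun i => fs i y - (1 - c i * δ i)) (Finset.mem_univ i)
    rw [← hθdef] at this
    linarith
  -- y is in the closed convex hull of the orbit of x
  have hymem : y ∈ closure (convexHull ℝ (isometryOrbit X x)) := by
    rw [hct x hx]; exact hyball
  obtain ⟨z, hzmem, hdyz⟩ := Metric.mem_closure_iff.mp hymem (θ/2) (by positivity)
  rw [convexHull_eq] at hzmem
  obtain ⟨ι, t, w, zf, hw0, hw1, hzorbit, hcm⟩ := hzmem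
  have hzsum : z = ∑ j ∈ t, w j • zf j := by
    rw [← hcm, Finset.centerMass, hw1, inv_one, one_smul]
  have hz1 : ∀ j ∈ t, ‖zf j‖ = 1 := by
    intro j hj
    obtain ⟨T, hT⟩ := hzorbit j hj
    rw [← hT, T.norm_map, hx]
  have hyz : ‖y - ∑ j ∈ t, w j • zf j‖ ≤ θ / 2 := by
    rw [← hzsum, ← dist_eq_norm]
    exact hdyz.le
  obtain ⟨j, hj, hgood⟩ := exists_good_point δ c fs hδ hcsum hnorm t w zf hw0 hw1 hz1 hθ hyz hyθ
  obtain ⟨T, hT⟩ := hzorbit j hj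
  -- transported functionals
  set g : Fin k → StrongDual ℝ X := fun i => (fs i).comp
    ((T.toContinuousLinearEquiv : X ≃L[ℝ] X) : X →L[ℝ] X) with hgdef
  have hgapp : ∀ i (u : X), g i u = fs i (T u) := fun i u => rfl
  have hgle : ∀ i, ‖g i‖ ≤ 1 := by
    intro i
    apply ContinuousLinearMap.opNorm_le_bound _ zero_le_one
    intro u
    rw [hgapp]
    calc ‖fs i (T u)‖ ≤ ‖fs i‖ * ‖T u‖ := (fs i).le_opNorm _
      _ = 1 * ‖u‖ := by rw [hnorm i, T.norm_map]
  have hgx : ∀ i, g i x > 1 - δ i := by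
    intro i
    rw [hgapp, hT]
    exact hgood i
  -- both G' and H' are deep in the transported slices
  have hfun_le : ∀ (F : StrongDual ℝ (StrongDual ℝ X)) (φ : StrongDual ℝ X), ‖F‖ ≤ 1 → ‖φ‖ ≤ 1 → F φ ≤ 1 := by
    intro F φ h1 h2
    calc F φ ≤ |F φ| := le_abs_self _
      _ ≤ ‖F‖ * ‖φ‖ := by simpa [Real.norm_eq_abs] using F.le_opNorm φ
      _ ≤ 1 := by nlinarith [norm_nonneg F]
  have haG : ∀ i, G' (g i) > 1 - 2 * δ i := by
    intro i
    have h1 := hpair (g i)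
    have h2 := hfun_le H' (g i) hH' (hgle i)
    have h3 := hgx i
    linarith
  have haH : ∀ i, H' (g i) > 1 - 2 * δ i := by
    intro i
    have h1 := hpair (g i)
    have h2 := hfun_le G' (g i) hG' (hgle i)
    have h3 := hgx i
    linarith
  -- margin m
  set m : ℝ := Finset.univ.inf' hne
    (fun i => min (G' (g i) - (1 - 2 * δ i)) (H' (g i) - (1 - 2 * δ i))) with hmdef
  have hm : 0 < m := by
    rw [hmdef, Finset.lt_inf'_iff]
    intro i _
    exact lt_min (by linarith [haG i]) (by linarith [haH i])
  have hmG : ∀ i, G' (g i) ≥ 1 - 2 * δ i + m := by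
    intro i
    have := Finset.inf'_le (fun i => min (G' (g i) - (1 - 2 * δ i))
      (H' (g i) - (1 - 2 * δ i))) (Finset.mem_univ i)
    rw [← hmdef] at this
    have := this.trans (min_le_left _ _)
    linarith
  have hmH : ∀ i, H' (g i) ≥ 1 - 2 * δ i + m := by
    intro i
    have := Finset.inf'_le (fun i => min (G' (g i) - (1 - 2 * δ i))
      (H' (g i) - (1 - 2 * δ i))) (Finset.mem_univ i)
    rw [← hmdef] at this
    have := this.trans (min_le_right _ _)
    linarith
  -- choose η, η'
  set η : ℝ := min 1 (m/4) with hηdef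
  have hηpos : 0 < η := lt_min one_pos (by positivity)
  have hη1 : η ≤ 1 := min_le_left _ _
  have hηm : η ≤ m/4 := min_le_right _ _
  set η' : ℝ := min ε (m/4) with hη'def
  have hη'pos : 0 < η' := lt_min hε (by positivity)
  have hη'ε : η' ≤ ε := min_le_left _ _
  have hη'm : η' ≤ m/4 := min_le_right _ _
  -- Helly approximation for G' and H' on (f, g 0, ..., g (k-1))
  obtain ⟨u, hu, huapp⟩ := helly_approx (Fin.cons f g) G' hG' hηpos hη'pos
  obtain ⟨v, hv, hvapp⟩ := helly_approx (Fin.cons f g) H' hH' hηpos hη'pos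
  have huappf : |f u - G' f| < η' := by simpa using huapp 0
  have hvappf : |f v - H' f| < η' := by simpa using hvapp 0
  have huappg : ∀ i, |g i u - G' (g i)| < η' := by
    intro i
    simpa using huapp i.succ
  have hvappg : ∀ i, |g i v - H' (g i)| < η' := by
    intro i
    simpa using hvapp i.succ
  -- scaled points
  have h1η : (0:ℝ) < 1 + η := by linarith
  set u₀ : X := (1 + η)⁻¹ • u with hu₀def
  set v₀ : X := (1 + η)⁻¹ • v with hv₀def
  have hu₀ : ‖u₀‖ ≤ 1 := by
    rw [hu₀def, norm_smul, Real.norm_eq_abs, abs_of_pos (by positivity)]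
    rw [inv_mul_le_iff₀ h1η, mul_one]
    exact hu
  have hv₀ : ‖v₀‖ ≤ 1 := by
    rw [hv₀def, norm_smul, Real.norm_eq_abs, abs_of_pos (by positivity)]
    rw [inv_mul_le_iff₀ h1η, mul_one]
    exact hv
  -- slice membership of T u₀ and T v₀
  have hsliceu : T u₀ ∈ {y ∈ closedBall (0 : X) 1 | ∀ i, fs i y > 1 - 2 * δ i} := by
    constructor
    · rw [mem_closedBall_zero_iff, T.norm_map]
      exact hu₀
    · intro i
      have h1 : fs i (T u₀) = (1 + η)⁻¹ * g i u := by
        rw [hgapp, hu₀def, map_smul, map_smul, smul_eq_mul]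
      have h2 : g i u > G' (g i) - η' := by
        have := abs_lt.mp (huappg i)
        linarith [this.1]
      have h3 : g i u > 1 - 2 * δ i + m - η' := by
        have := hmG i
        linarith
      rw [h1, gt_iff_lt, ← sub_pos]
      have hδi := hδ i
      have expand : (1 + η)⁻¹ * g i u - (1 - 2 * δ i)
          = (1 + η)⁻¹ * (g i u - (1 - 2 * δ i) * (1 + η)) := by
        field_simp
        try ring
      rw [expand]
      apply mul_pos (by positivity)
      have hbound : (1 - 2 * δ i) * η ≤ m / 4 := by
        rcases le_or_gt (1 - 2 * δ i) 0 with hcase | hcase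
        · have : (1 - 2 * δ i) * η ≤ 0 := mul_nonpos_of_nonpos_of_nonneg hcase hηpos.le
          linarith
        · have : (1 - 2 * δ i) * η ≤ 1 * η := by nlinarith [hδi.1, hδi.2, hηpos.le]
          linarith
      have hring : (1 - 2 * δ i) * (1 + η) = (1 - 2 * δ i) + (1 - 2 * δ i) * η := by ring
      linarith
  have hslicev : T v₀ ∈ {y ∈ closedBall (0 : X) 1 | ∀ i, fs i y > 1 - 2 * δ i} := by
    constructor
    · rw [mem_closedBall_zero_iff, T.norm_map]
      exact hv₀
    · intro i
      have h1 : fs i (T v₀) = (1 + η)⁻¹ * g i v := by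
        rw [hgapp, hv₀def, map_smul, map_smul, smul_eq_mul]
      have h2 : g i v > H' (g i) - η' := by
        have := abs_lt.mp (hvappg i)
        linarith [this.1]
      have h3 : g i v > 1 - 2 * δ i + m - η' := by
        have := hmH i
        linarith
      rw [h1, gt_iff_lt, ← sub_pos]
      have hδi := hδ i
      have expand : (1 + η)⁻¹ * g i v - (1 - 2 * δ i)
          = (1 + η)⁻¹ * (g i v - (1 - 2 * δ i) * (1 + η)) := by
        field_simp
        try ring
      rw [expand]
      apply mul_pos (by positivity)
      have hbound : (1 - 2 * δ i) * η ≤ m / 4 := by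
        rcases le_or_gt (1 - 2 * δ i) 0 with hcase | hcase
        · have : (1 - 2 * δ i) * η ≤ 0 := mul_nonpos_of_nonpos_of_nonneg hcase hηpos.le
          linarith
        · have : (1 - 2 * δ i) * η ≤ 1 * η := by nlinarith [hδi.1, hδi.2, hηpos.le]
          linarith
      have hring : (1 - 2 * δ i) * (1 + η) = (1 - 2 * δ i) + (1 - 2 * δ i) * η := by ring
      linarith
  -- the two slice points are ε-close
  have hbdd : Bornology.IsBounded {y ∈ closedBall (0 : X) 1 | ∀ i, fs i y > 1 - 2 * δ i} :=
    (isBounded_closedBall (x := (0:X)) (r := 1)).subset (Set.sep_subset _ _)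
  have hclose : dist (T u₀) (T v₀) < ε :=
    lt_of_le_of_lt (dist_le_diam_of_mem hbdd hsliceu hslicev) hdiam
  have hclose' : ‖u₀ - v₀‖ < ε := by
    rw [← dist_eq_norm, ← T.dist_map u₀ v₀]
    exact hclose
  -- conclude
  have hfu : f u = (1 + η) * f u₀ := by
    rw [hu₀def, map_smul, smul_eq_mul]
    field_simp
  have hfv : f v = (1 + η) * f v₀ := by
    rw [hv₀def, map_smul, smul_eq_mul]
    field_simp
  have hfdiff : f u₀ - f v₀ ≤ ε := by
    calc f u₀ - f v₀ = f (u₀ - v₀) := by rw [map_sub]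
      _ ≤ |f (u₀ - v₀)| := le_abs_self _
      _ ≤ ‖f‖ * ‖u₀ - v₀‖ := by
            have hh := f.le_opNorm (u₀ - v₀)
            rwa [Real.norm_eq_abs] at hh
      _ ≤ 1 * ε := by nlinarith [norm_nonneg (u₀ - v₀), hclose'.le]
      _ = ε := one_mul _
  have e1 := abs_lt.mp huappf
  have e2 := abs_lt.mp hvappf
  have : G' f - H' f < (f u + η') - (f v - η') := by linarith [e1.1, e1.2, e2.1, e2.2]
  have : G' f - H' f < (1 + η) * (f u₀ - f v₀) + 2 * η' := by
    rw [hfu, hfv] at this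
    linarith
  have hεb : (1 + η) * (f u₀ - f v₀) ≤ 2 * ε := by
    rcases le_or_gt (f u₀ - f v₀) 0 with hcase | hcase
    · nlinarith
    · nlinarith
  linarith


set_option maxHeartbeats 2000000 in
theorem sphere_points_extreme_in_bidual_ball
    (X : Type*) [NormedAddCommGroup X] [NormedSpace ℝ X] [CompleteSpace X]
    (hct : ConvexTransitive X)
    (h : ∀ ε : ℝ, 0 < ε → ∃ (k : ℕ) (δ : Fin k → ℝ) (c : Fin k → ℝ) (f : Fin k → StrongDual ℝ X),
      (∀ i, δ i ∈ Set.Ioo (0 : ℝ) 1) ∧ (∀ i, c i ∈ Set.Ioc (0 : ℝ) 1) ∧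
      (∑ i, c i = 1) ∧ (∀ i, ‖f i‖ = 1) ∧
      ({y ∈ closedBall (0 : X) 1 | ∀ i, f i y > 1 - c i * δ i}).Nonempty ∧
      diam {y ∈ closedBall (0 : X) 1 | ∀ i, f i y > 1 - 2 * δ i} < ε) :
    ∀ x : X, ‖x‖ = 1 → ∀ G H : StrongDual ℝ (StrongDual ℝ X), G ∈ closedBall (0 : StrongDual ℝ (StrongDual ℝ X)) 1 →
      H ∈ closedBall (0 : StrongDual ℝ (StrongDual ℝ X)) 1 →
      inclusionInDoubleDual ℝ X x = (2 : ℝ)⁻¹ • (G + H) → G = H := by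
  intro x hx G H hG hH heq
  replace hG : ‖G‖ ≤ 1 := by
    have h' : dist G 0 ≤ 1 := hG
    exact (dist_zero_right G).symm.trans_le h'
  replace hH : ‖H‖ ≤ 1 := by
    have h' : dist H 0 ≤ 1 := hH
    exact (dist_zero_right H).symm.trans_le h'
  -- the key one-sided estimate, proven symmetrically in (G, H)
  have key := one_sided_estimate X hct h x hx
  -- pairing identity
  have hpair : ∀ φ : StrongDual ℝ X, G φ + H φ = 2 * φ x := by
    intro φ
    have h1 : (inclusionInDoubleDual ℝ X x) φ = ((2:ℝ)⁻¹ • (G + H)) φ := by rw [heq]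
    rw [dual_def] at h1
    simp only [ContinuousLinearMap.smul_apply, ContinuousLinearMap.add_apply,
      smul_eq_mul] at h1
    linarith
  have hpair' : ∀ φ : StrongDual ℝ X, H φ + G φ = 2 * φ x := fun φ => by
    rw [add_comm]; exact hpair φ
  have hle : ∀ f : StrongDual ℝ X, ‖f‖ ≤ 1 → G f ≤ H f := by
    intro f hf
    by_contra hlt
    push_neg at hlt
    have h1 := key G H hG hH hpair f hf ((G f - H f)/8) (by linarith)
    linarith
  have hge : ∀ f : StrongDual ℝ X, ‖f‖ ≤ 1 → H f ≤ G f := by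
    intro f hf
    by_contra hlt
    push_neg at hlt
    have h1 := key H G hH hG hpair' f hf ((H f - G f)/8) (by linarith)
    linarith
  ext f
  rcases eq_or_ne f 0 with rfl | hf0
  · simp
  · have hnf : (0:ℝ) < ‖f‖ := norm_pos_iff.mpr hf0
    set f' : StrongDual ℝ X := ‖f‖⁻¹ • f with hf'def
    have hf' : ‖f'‖ ≤ 1 := by
      rw [hf'def, norm_smul, Real.norm_eq_abs, abs_of_pos (by positivity)]
      rw [inv_mul_le_iff₀ hnf, mul_one]
    have heqf' : G f' = H f' := le_antisymm (hle f' hf') (hge f' hf')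
    have hGf : G f' = ‖f‖⁻¹ * G f := by rw [hf'def, map_smul, smul_eq_mul]
    have hHf : H f' = ‖f‖⁻¹ * H f := by rw [hf'def, map_smul, smul_eq_mul]
    rw [hGf, hHf] at heqf'
    exact mul_left_cancel₀ (inv_ne_zero hnf.ne') heqf'
end

section
/- Let X be a real Banach space and x* a norm-one functional in X*. Then eta(X*, x*) = inf{ diam(S(B_X, x*, alpha)) : 0 < alpha < 1 }, where eta(X*, x*) = inf_{delta > 0} sup{ (||x* + h|| + ||x* - h|| - 2)/||h|| : h in X*, 0 < ||h|| <= delta } is the modulus of roughness of the dual norm at x*, and S(B_X, x*, alpha) = {x in B_X : x*(x) > alpha} is the open slice of the closed unit ball of X determined by x* and alpha. -/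
open Metric NormedSpace

lemma exists_approx_functional {X : Type*} [NormedAddCommGroup X] [NormedSpace ℝ X]
    (f : StrongDual ℝ X) {c : ℝ} (hc : 0 < c) : ∃ x : X, ‖x‖ ≤ 1 ∧ ‖f‖ - c < f x := by
  rcases lt_or_ge (‖f‖ - c) 0 with h | h
  · exact ⟨0, by simp, by simpa using h⟩
  · obtain ⟨x, hx1, hx2⟩ := f.exists_lt_apply_of_lt_opNorm (show ‖f‖ - c < ‖f‖ by linarith)
    rcases le_or_gt 0 (f x) with hfx | hfx
    · exact ⟨x, hx1.le, by rwa [Real.norm_eq_abs, abs_of_nonneg hfx] at hx2⟩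
    · refine ⟨-x, by simpa using hx1.le, ?_⟩
      rw [map_neg]
      rwa [Real.norm_eq_abs, abs_of_neg hfx] at hx2

set_option maxHeartbeats 1000000 in
theorem modulus_of_roughness_eq_inf_diam_slices
    (X : Type*) [NormedAddCommGroup X] [NormedSpace ℝ X] [CompleteSpace X]
    (u : StrongDual ℝ X) (hu : ‖u‖ = 1) :
    sInf {s : ℝ | ∃ δ : ℝ, 0 < δ ∧
        s = sSup ((fun h : StrongDual ℝ X => (‖u + h‖ + ‖u - h‖ - 2) / ‖h‖) ''
          {h : StrongDual ℝ X | h ≠ 0 ∧ ‖h‖ ≤ δ})} =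
      sInf ((fun α : ℝ => diam {x ∈ closedBall (0 : X) 1 | u x > α}) '' Set.Ioo (0 : ℝ) 1) := by
  set Q : StrongDual ℝ X → ℝ := fun h => (‖u + h‖ + ‖u - h‖ - 2) / ‖h‖ with hQdef
  set T : ℝ → Set ℝ := fun δ => Q '' {h : StrongDual ℝ X | h ≠ 0 ∧ ‖h‖ ≤ δ} with hTdef
  set A : Set ℝ := {s : ℝ | ∃ δ : ℝ, 0 < δ ∧ s = sSup (T δ)} with hAdef
  set D : ℝ → ℝ := fun α => diam {x ∈ closedBall (0 : X) 1 | u x > α} with hDdef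
  set B : Set ℝ := D '' Set.Ioo (0 : ℝ) 1 with hBdef
  -- basic facts about Q
  have hQ0 : ∀ h : StrongDual ℝ X, 0 ≤ Q h := by
    intro h
    have h2u : ‖u + u‖ = 2 := by
      rw [← two_smul ℝ u, norm_smul, hu]; norm_num
    have : (2 : ℝ) ≤ ‖u + h‖ + ‖u - h‖ := by
      calc (2 : ℝ) = ‖(u + h) + (u - h)‖ := by rw [show (u + h) + (u - h) = u + u by abel, h2u]
        _ ≤ ‖u + h‖ + ‖u - h‖ := norm_add_le _ _
    exact div_nonneg (by linarith) (norm_nonneg _)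
  have hQ2 : ∀ h : StrongDual ℝ X, h ≠ 0 → Q h ≤ 2 := by
    intro h hne
    have hh0 : 0 < ‖h‖ := norm_pos_iff.mpr hne
    have h1 : ‖u + h‖ ≤ 1 + ‖h‖ := by
      calc ‖u + h‖ ≤ ‖u‖ + ‖h‖ := norm_add_le _ _
        _ = 1 + ‖h‖ := by rw [hu]
    have h2 : ‖u - h‖ ≤ 1 + ‖h‖ := by
      calc ‖u - h‖ ≤ ‖u‖ + ‖h‖ := norm_sub_le _ _
        _ = 1 + ‖h‖ := by rw [hu]
    rw [hQdef, div_le_iff₀ hh0]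
    linarith
  -- nonemptiness, boundedness of T δ
  have hune : u ≠ 0 := by intro h; rw [h, norm_zero] at hu; norm_num at hu
  have hTne : ∀ δ : ℝ, 0 < δ → (T δ).Nonempty := by
    intro δ hδ
    refine ⟨Q (δ • u), ⟨δ • u, ⟨?_, ?_⟩, rfl⟩⟩
    · simp [smul_eq_zero, hune, ne_of_gt hδ]
    · rw [norm_smul, hu, Real.norm_eq_abs, abs_of_pos hδ]; simp
  have hTbdd : ∀ δ : ℝ, BddAbove (T δ) := by
    intro δ
    refine ⟨2, ?_⟩
    rintro _ ⟨h, ⟨hne, -⟩, rfl⟩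
    exact hQ2 h hne
  have hs0 : ∀ δ : ℝ, 0 < δ → 0 ≤ sSup (T δ) := by
    intro δ hδ
    obtain ⟨q, hq⟩ := hTne δ hδ
    obtain ⟨h, hmem, rfl⟩ := hq
    exact le_trans (hQ0 h) (le_csSup (hTbdd δ) ⟨h, hmem, rfl⟩)
  -- A facts
  have hAne : A.Nonempty := ⟨sSup (T 1), 1, one_pos, rfl⟩
  have hAbdd : BddBelow A := by
    refine ⟨0, ?_⟩
    rintro _ ⟨δ, hδ, rfl⟩
    exact hs0 δ hδ
  -- B facts
  have hBne : B.Nonempty := ⟨D (1/2), ⟨1/2, by norm_num, rfl⟩⟩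
  have hBbdd : BddBelow B := by
    refine ⟨0, ?_⟩
    rintro _ ⟨α, -, rfl⟩
    exact diam_nonneg
  -- slice facts
  have hSliceSub : ∀ α : ℝ, {x ∈ closedBall (0 : X) 1 | u x > α} ⊆ closedBall (0 : X) 1 :=
    fun α => Set.sep_subset _ _
  have hSliceBdd : ∀ α : ℝ, Bornology.IsBounded {x ∈ closedBall (0 : X) 1 | u x > α} :=
    fun α => (isBounded_closedBall).subset (hSliceSub α)
  apply le_antisymm
  · -- sInf A ≤ sInf B
    refine le_csInf hBne ?_
    rintro _ ⟨α, ⟨hα0, hα1⟩, rfl⟩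
    refine le_of_forall_pos_le_add ?_
    intro ε hε
    set δ : ℝ := (1 - α) / (3 + ε) with hδdef
    have hδ : 0 < δ := div_pos (by linarith) (by linarith)
    have key : sSup (T δ) ≤ D α + ε := by
      apply csSup_le (hTne δ hδ)
      rintro _ ⟨h, ⟨hne, hh⟩, rfl⟩
      have hh0 : 0 < ‖h‖ := norm_pos_iff.mpr hne
      obtain ⟨x, hx1, hx2⟩ := exists_approx_functional (u + h) (mul_pos (half_pos hε) hh0)
      obtain ⟨y, hy1, hy2⟩ := exists_approx_functional (u - h) (mul_pos (half_pos hε) hh0)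
      have hnup : 1 - ‖h‖ ≤ ‖u + h‖ := by
        have := norm_sub_norm_le u (u + h)
        have h' : ‖u - (u + h)‖ = ‖h‖ := by rw [show u - (u + h) = -h by abel, norm_neg]
        rw [h', hu] at this
        linarith
      have hnum : 1 - ‖h‖ ≤ ‖u - h‖ := by
        have := norm_sub_norm_le u (u - h)
        have h' : ‖u - (u - h)‖ = ‖h‖ := by rw [show u - (u - h) = h by abel]
        rw [h', hu] at this
        linarith
      have hbx : |h x| ≤ ‖h‖ := by
        calc |h x| = ‖h x‖ := rfl
          _ ≤ ‖h‖ * ‖x‖ := h.le_opNorm x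
          _ ≤ ‖h‖ * 1 := mul_le_mul_of_nonneg_left hx1 (norm_nonneg _)
          _ = ‖h‖ := mul_one _
      have hby : |h y| ≤ ‖h‖ := by
        calc |h y| = ‖h y‖ := rfl
          _ ≤ ‖h‖ * ‖y‖ := h.le_opNorm y
          _ ≤ ‖h‖ * 1 := mul_le_mul_of_nonneg_left hy1 (norm_nonneg _)
          _ = ‖h‖ := mul_one _
      have hεh : ε / 2 * ‖h‖ ≤ ε / 2 * δ := by nlinarith
      -- u x > α and u y > α
      have hδsm : (2 + ε/2) * ‖h‖ < 1 - α := by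
        have h1 : (2 + ε/2) * ‖h‖ ≤ (2 + ε/2) * δ :=
          mul_le_mul_of_nonneg_left hh (by linarith)
        have h2 : (2 + ε/2) * δ < (3 + ε) * δ :=
          mul_lt_mul_of_pos_right (by linarith) hδ
        have h3 : (3 + ε) * δ = 1 - α := by
          rw [hδdef]; field_simp
        linarith
      have hux : α < u x := by
        have h1 : u x = (u + h) x - h x := by simp
        have h2 : ‖u + h‖ - ε/2 * ‖h‖ < (u + h) x := hx2
        have := abs_le.mp hbx
        linarith [hδsm, this.1, this.2]
      have huy : α < u y := by
        have h1 : u y = (u - h) y + h y := by simp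
        have h2 : ‖u - h‖ - ε/2 * ‖h‖ < (u - h) y := hy2
        have := abs_le.mp hby
        linarith [hδsm, this.1, this.2]
      -- x, y in slice
      have hxs : x ∈ {x ∈ closedBall (0 : X) 1 | u x > α} := by
        refine ⟨?_, hux⟩
        rw [mem_closedBall, dist_zero_right]; exact hx1
      have hys : y ∈ {x ∈ closedBall (0 : X) 1 | u x > α} := by
        refine ⟨?_, huy⟩
        rw [mem_closedBall, dist_zero_right]; exact hy1
      have hdxy : ‖x - y‖ ≤ D α := by
        rw [← dist_eq_norm]
        exact dist_le_diam_of_mem (hSliceBdd α) hxs hys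
      -- numerator bound
      have hux1 : u x ≤ 1 := by
        calc u x ≤ |u x| := le_abs_self _
          _ ≤ ‖u‖ * ‖x‖ := u.le_opNorm x
          _ ≤ 1 := by rw [hu]; simpa using hx1
      have huy1 : u y ≤ 1 := by
        calc u y ≤ |u y| := le_abs_self _
          _ ≤ ‖u‖ * ‖y‖ := u.le_opNorm y
          _ ≤ 1 := by rw [hu]; simpa using hy1
      have hhxy : h x - h y ≤ ‖h‖ * ‖x - y‖ := by
        calc h x - h y = h (x - y) := by simp
          _ ≤ |h (x - y)| := le_abs_self _
          _ ≤ ‖h‖ * ‖x - y‖ := h.le_opNorm _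
      have hnumer : ‖u + h‖ + ‖u - h‖ - 2 ≤ ‖h‖ * (D α + ε) := by
        have e1 : ‖u + h‖ < (u + h) x + ε/2 * ‖h‖ := by linarith
        have e2 : ‖u - h‖ < (u - h) y + ε/2 * ‖h‖ := by linarith
        have e3 : (u + h) x = u x + h x := by simp
        have e4 : (u - h) y = u y - h y := by simp
        have p1 : ‖h‖ * ‖x - y‖ ≤ ‖h‖ * D α :=
          mul_le_mul_of_nonneg_left hdxy (norm_nonneg h)
        have p2 : ‖h‖ * (D α + ε) = ‖h‖ * D α + ‖h‖ * ε := by ring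
        have p3 : ε / 2 * ‖h‖ + ε / 2 * ‖h‖ = ‖h‖ * ε := by ring
        linarith
      rw [hQdef]
      rw [div_le_iff₀ hh0]
      calc ‖u + h‖ + ‖u - h‖ - 2 ≤ ‖h‖ * (D α + ε) := hnumer
        _ = (D α + ε) * ‖h‖ := mul_comm _ _
    calc sInf A ≤ sSup (T δ) := csInf_le hAbdd ⟨δ, hδ, rfl⟩
      _ ≤ D α + ε := key
  · -- sInf B ≤ sInf A
    refine le_csInf hAne ?_
    rintro _ ⟨δ, hδ, rfl⟩
    refine le_of_forall_pos_le_add ?_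
    intro ε hε
    set α : ℝ := max (1/2) (1 - ε * δ / 4) with hαdef
    have hα : α ∈ Set.Ioo (0 : ℝ) 1 := by
      constructor
      · calc (0:ℝ) < 1/2 := by norm_num
          _ ≤ α := le_max_left _ _
      · apply max_lt (by norm_num)
        nlinarith [mul_pos hε hδ]
    have hα2 : 2 * (1 - α) / δ ≤ ε / 2 := by
      have : 1 - ε * δ / 4 ≤ α := le_max_right _ _
      rw [div_le_iff₀ hδ]
      linarith
    have hDle : D α ≤ sSup (T δ) + ε := by
      apply diam_le_of_forall_dist_le (by linarith [hs0 δ hδ])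
      intro x hx y hy
      rcases eq_or_ne x y with rfl | hxy
      · simp; linarith [hs0 δ hδ]
      obtain ⟨g, hg1, hg2⟩ := exists_dual_vector ℝ (x - y) (norm_ne_zero_iff.mpr (sub_ne_zero.mpr hxy))
      set h : StrongDual ℝ X := δ • g with hhdef
      have hhn : ‖h‖ = δ := by
        rw [hhdef, norm_smul, hg1, Real.norm_eq_abs, abs_of_pos hδ, mul_one]
      have hhne : h ≠ 0 := by
        intro hc
        rw [hc, norm_zero] at hhn
        exact absurd hhn.symm (ne_of_gt hδ)
      have hQmem : Q h ∈ T δ := ⟨h, ⟨hhne, le_of_eq hhn⟩, rfl⟩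
      have hQle : Q h ≤ sSup (T δ) := le_csSup (hTbdd δ) hQmem
      obtain ⟨hxball, hxα⟩ := hx
      obtain ⟨hyball, hyα⟩ := hy
      have hxn : ‖x‖ ≤ 1 := by rwa [mem_closedBall, dist_zero_right] at hxball
      have hyn : ‖y‖ ≤ 1 := by rwa [mem_closedBall, dist_zero_right] at hyball
      have e1 : (u + h) x ≤ ‖u + h‖ := by
        calc (u + h) x ≤ |(u + h) x| := le_abs_self _
          _ ≤ ‖u + h‖ * ‖x‖ := (u + h).le_opNorm x
          _ ≤ ‖u + h‖ * 1 := mul_le_mul_of_nonneg_left hxn (norm_nonneg _)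
          _ = ‖u + h‖ := mul_one _
      have e2 : (u - h) y ≤ ‖u - h‖ := by
        calc (u - h) y ≤ |(u - h) y| := le_abs_self _
          _ ≤ ‖u - h‖ * ‖y‖ := (u - h).le_opNorm y
          _ ≤ ‖u - h‖ * 1 := mul_le_mul_of_nonneg_left hyn (norm_nonneg _)
          _ = ‖u - h‖ := mul_one _
      have e3 : (u + h) x = u x + δ * g x := by simp [hhdef]
      have e4 : (u - h) y = u y - δ * g y := by simp [hhdef]
      have e5 : g x - g y = ‖x - y‖ := by
        rw [← map_sub]; exact_mod_cast hg2
      have e6 : δ * (g x - g y) = δ * ‖x - y‖ := by rw [e5]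
      have hlow : 2 * α - 2 + δ * ‖x - y‖ ≤ ‖u + h‖ + ‖u - h‖ - 2 := by
        have q1 : α + δ * g x < ‖u + h‖ := by linarith [e1, e3, hxα]
        have q2 : α - δ * g y < ‖u - h‖ := by linarith [e2, e4, hyα]
        linarith
      have hQlow : ‖x - y‖ - ε / 2 ≤ Q h := by
        have hQeq : Q h = (‖u + h‖ + ‖u - h‖ - 2) / δ := by rw [← hhn]
        rw [hQeq, le_div_iff₀ hδ]
        have := (div_le_iff₀ hδ).mp hα2
        linarith [hlow]
      calc dist x y = ‖x - y‖ := dist_eq_norm _ _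
        _ ≤ Q h + ε / 2 := by linarith
        _ ≤ sSup (T δ) + ε := by linarith
    calc sInf B ≤ D α := csInf_le hBbdd ⟨α, hα, rfl⟩
      _ ≤ sSup (T δ) + ε := hDle
end
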